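/- Suppose the initial velocity field v : [0,1] → ℝ is positive and non-decreasing and the external force F : ℝ → ℝ is positive and non-decreasing on [0,∞). Then the system has no collisions on [0,∞): y(t,x₁) ≠ y(t,x₂) for all t ≥ 0 and all x₁ ≠ x₂ in [0,1]. -/

import Mathlib

open Set

/-!
Both the velocity of a single particle and the gap between two ordered particles are kept
positive by a first-exit argument. Before the first time `T` at which the velocity would vanish,
the particle moves right from `x ≥ 0`, so the force is nonnegative and the velocity at `T` is
at least `v x > 0`. Before the first time the gap `w = y x₂ - y x₁` (`x₁ < x₂`) would close,
`0 ≤ y x₁ ≤ y x₂`, so the monotone force gives `w'' ≥ 0`; since `w' 0 = v x₂ - v x₁ ≥ 0`,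
the gap only grows and is still at least `x₂ - x₁ > 0` at that time.
-/

theorem ContinuousOn.pos_of_forall_Ico_pos_imp_pos {α : Type*}
    [ConditionallyCompleteLinearOrder α] [TopologicalSpace α] [OrderTopology α]
    {f : α → ℝ} {a : α} (hf : ContinuousOn f (Ici a)) (ha : 0 < f a)
    (hstep : ∀ T, a < T → (∀ s ∈ Ico a T, 0 < f s) → 0 < f T) :
    ∀ t, a ≤ t → 0 < f t := by
  by_contra! ⟨t, hat, hft⟩
  set S := Ici a ∩ f ⁻¹' Iic 0
  have hS_bdd : BddBelow S := ⟨a, fun s hs => hs.1⟩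
  have hT : sInf S ∈ S :=
    (hf.preimage_isClosed_of_isClosed isClosed_Ici isClosed_Iic).csInf_mem ⟨t, hat, hft⟩ hS_bdd
  have haT : a < sInf S := hT.1.lt_of_ne fun h => (h ▸ hT.2 : f a ≤ 0).not_gt ha
  have hpos : ∀ s ∈ Ico a (sInf S), 0 < f s := fun s hs =>
    lt_of_not_ge fun hfs => hs.2.not_ge (csInf_le hS_bdd ⟨hs.1, hfs⟩)
  exact (hstep _ haT hpos).not_ge hT.2

theorem monotoneOn_Icc_of_hasDerivAt_nonneg {f f' : ℝ → ℝ} {a b : ℝ}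
    (hf : ∀ t ∈ Icc a b, HasDerivAt f (f' t) t) (hf' : ∀ t ∈ Ioo a b, 0 ≤ f' t) :
    MonotoneOn f (Icc a b) :=
  monotoneOn_of_hasDerivWithinAt_nonneg (convex_Icc a b)
    (fun t ht => (hf t ht).continuousAt.continuousWithinAt)
    (fun t ht => by
      rw [interior_Icc] at ht ⊢
      exact (hf t (Ioo_subset_Icc_self ht)).hasDerivWithinAt)
    (fun t ht => hf' t (interior_Icc (a := a) ▸ ht))

section Newton

variable {F : ℝ → ℝ} {y y' y₁ y₁' y₂ y₂' : ℝ → ℝ}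

theorem newton_velocity_pos (hF : ∀ z, 0 ≤ z → 0 ≤ F z)
    (hy : ∀ t, 0 ≤ t → HasDerivAt y (y' t) t) (hy' : ∀ t, 0 ≤ t → HasDerivAt y' (F (y t)) t)
    (hy0 : 0 ≤ y 0) (hv0 : 0 < y' 0) :
    ∀ t, 0 ≤ t → 0 < y' t := by
  refine ContinuousOn.pos_of_forall_Ico_pos_imp_pos
    (fun t ht => (hy' t ht).continuousAt.continuousWithinAt) hv0 fun T hT hpos => ?_
  have h0T : (0 : ℝ) ∈ Icc 0 T := left_mem_Icc.2 hT.le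
  have hy_mono : MonotoneOn y (Icc 0 T) :=
    monotoneOn_Icc_of_hasDerivAt_nonneg (fun s hs => hy s hs.1)
      fun s hs => (hpos s (Ioo_subset_Ico_self hs)).le
  have hv_mono : MonotoneOn y' (Icc 0 T) :=
    monotoneOn_Icc_of_hasDerivAt_nonneg (fun s hs => hy' s hs.1)
      fun s hs => hF _ (hy0.trans (hy_mono h0T (Ioo_subset_Icc_self hs) hs.1.le))
  exact hv0.trans_le (hv_mono h0T (right_mem_Icc.2 hT.le) hT.le)

theorem newton_position_ge_initial (hF : ∀ z, 0 ≤ z → 0 ≤ F z)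
    (hy : ∀ t, 0 ≤ t → HasDerivAt y (y' t) t) (hy' : ∀ t, 0 ≤ t → HasDerivAt y' (F (y t)) t)
    (hy0 : 0 ≤ y 0) (hv0 : 0 < y' 0) :
    ∀ t, 0 ≤ t → y 0 ≤ y t := fun _ ht =>
  monotoneOn_Icc_of_hasDerivAt_nonneg (fun s hs => hy s hs.1)
    (fun s hs => (newton_velocity_pos hF hy hy' hy0 hv0 s hs.1.le).le)
    (left_mem_Icc.2 ht) (right_mem_Icc.2 ht) ht

theorem newton_lt_of_lt (hF : ∀ z, 0 ≤ z → 0 ≤ F z) (hF_mono : MonotoneOn F (Ici 0))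
    (hy₁ : ∀ t, 0 ≤ t → HasDerivAt y₁ (y₁' t) t)
    (hy₁' : ∀ t, 0 ≤ t → HasDerivAt y₁' (F (y₁ t)) t)
    (hy₂ : ∀ t, 0 ≤ t → HasDerivAt y₂ (y₂' t) t)
    (hy₂' : ∀ t, 0 ≤ t → HasDerivAt y₂' (F (y₂ t)) t)
    (hy₁0 : 0 ≤ y₁ 0) (hv₁0 : 0 < y₁' 0) (hy0 : y₁ 0 < y₂ 0) (hv0 : y₁' 0 ≤ y₂' 0) :
    ∀ t, 0 ≤ t → y₁ t < y₂ t := by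
  have hy₁_nonneg : ∀ t, 0 ≤ t → 0 ≤ y₁ t := fun t ht =>
    hy₁0.trans (newton_position_ge_initial hF hy₁ hy₁' hy₁0 hv₁0 t ht)
  have hw : ∀ t, 0 ≤ t → HasDerivAt (fun s => y₂ s - y₁ s) (y₂' t - y₁' t) t :=
    fun t ht => (hy₂ t ht).sub (hy₁ t ht)
  have hw' : ∀ t, 0 ≤ t → HasDerivAt (fun s => y₂' s - y₁' s) (F (y₂ t) - F (y₁ t)) t :=
    fun t ht => (hy₂' t ht).sub (hy₁' t ht)
  suffices ∀ t, 0 ≤ t → 0 < y₂ t - y₁ t from fun t ht => sub_pos.1 (this t ht)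
  refine ContinuousOn.pos_of_forall_Ico_pos_imp_pos
    (fun t ht => (hw t ht).continuousAt.continuousWithinAt) (sub_pos.2 hy0) fun T hT hpos => ?_
  have h0T : (0 : ℝ) ∈ Icc 0 T := left_mem_Icc.2 hT.le
  have hw'_mono : MonotoneOn (fun s => y₂' s - y₁' s) (Icc 0 T) :=
    monotoneOn_Icc_of_hasDerivAt_nonneg (fun s hs => hw' s hs.1) fun s hs => by
      have hs₁ := hy₁_nonneg s hs.1.le
      have hs₁₂ : y₁ s ≤ y₂ s := (sub_pos.1 (hpos s (Ioo_subset_Ico_self hs))).le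
      exact sub_nonneg.2 (hF_mono hs₁ (hs₁.trans hs₁₂) hs₁₂)
  have hw_mono : MonotoneOn (fun s => y₂ s - y₁ s) (Icc 0 T) :=
    monotoneOn_Icc_of_hasDerivAt_nonneg (fun s hs => hw s hs.1) fun s hs =>
      (sub_nonneg.2 hv0).trans (hw'_mono h0T (Ioo_subset_Icc_self hs) hs.1.le)
  exact (sub_pos.2 hy0).trans_le (hw_mono h0T (right_mem_Icc.2 hT.le) hT.le)

end Newton

theorem no_collisions_of_monotone_velocity_and_force
    (F v : ℝ → ℝ) (y y' : ℝ → ℝ → ℝ)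
    (hF_pos : ∀ z, 0 ≤ z → 0 < F z)
    (hF_mono : MonotoneOn F (Ici (0 : ℝ)))
    (hv_pos : ∀ x ∈ Icc (0:ℝ) 1, 0 < v x)
    (hv_mono : MonotoneOn v (Icc (0:ℝ) 1))
    (hy0 : ∀ x ∈ Icc (0:ℝ) 1, y x 0 = x)
    (hy0' : ∀ x ∈ Icc (0:ℝ) 1, y' x 0 = v x)
    (hode1 : ∀ x ∈ Icc (0:ℝ) 1, ∀ t, 0 ≤ t → HasDerivAt (y x) (y' x t) t)
    (hode2 : ∀ x ∈ Icc (0:ℝ) 1, ∀ t, 0 ≤ t → HasDerivAt (y' x) (F (y x t)) t) :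
    ∀ t, 0 ≤ t → ∀ x₁ ∈ Icc (0:ℝ) 1, ∀ x₂ ∈ Icc (0:ℝ) 1, x₁ ≠ x₂ → y x₁ t ≠ y x₂ t := by
  intro t ht x₁ hx₁ x₂ hx₂ hne
  have hlt : ∀ a ∈ Icc (0:ℝ) 1, ∀ b ∈ Icc (0:ℝ) 1, a < b → y a t < y b t := by
    intro a ha b hb hab
    refine newton_lt_of_lt (fun z hz => (hF_pos z hz).le) hF_mono (hode1 a ha) (hode2 a ha)
      (hode1 b hb) (hode2 b hb) ?_ ?_ ?_ ?_ t ht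
    · simpa only [hy0 a ha] using ha.1
    · simpa only [hy0' a ha] using hv_pos a ha
    · simpa only [hy0 a ha, hy0 b hb] using hab
    · simpa only [hy0' a ha, hy0' b hb] using hv_mono ha hb hab.le
  rcases hne.lt_or_gt with h | h
  · exact (hlt x₁ hx₁ x₂ hx₂ h).ne
  · exact (hlt x₂ hx₂ x₁ hx₁ h).ne'
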